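/- arXiv:2007.01162 — 2 statements merged into one kernel-verified Lean document; each statement's English description precedes it below -/
import Mathlib

section
/- Let t, τ ∈ ℝ with t ≠ 0 and τ ≠ 0, and suppose every loss x ↦ f(x;θ) is differentiable in θ. Then the hierarchical multi-objective tilted loss J̃(t,τ;·) is differentiable with ∇_θ J̃(t,τ;θ) = Σ_{g∈[G]} Σ_{x∈g} w_{g,x}(t,τ;θ)·∇_θ f(x;θ), where w_{g,x}(t,τ;θ) = [((1/|g|)·Σ_{y∈g} exp(τ·f(y;θ)))^{t/τ − 1} · exp(τ·f(x;θ))] / [Σ_{g'∈[G]} |g'|·((1/|g'|)·Σ_{y∈g'} exp(τ·f(y;θ)))^{t/τ}]. -/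
/-!
Both levels of the hierarchy are tilted losses `(1/c) log Σᵢ pᵢ exp(c uᵢ)` with positive weights
(`|g|/N` over groups, `1/|g|` within a group),
whose gradient is the average of the `∇uᵢ` under the tilted weights `pᵢ exp(c uᵢ) / Σⱼ pⱼ exp(c uⱼ)`.
The chain rule multiplies the group weight by the sample weight, and since
`exp(t R̃_g) = S_g ^ (t/τ)` the product is `w_{g,x}`.
-/

open Real Finset

section TiltedLoss

variable {ι : Type*} [Fintype ι]

noncomputable def tiltedLoss (c : ℝ) (p u : ι → ℝ) : ℝ :=
  (1 / c) * log (∑ i, p i * exp (c * u i))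

noncomputable def tiltedWeight (c : ℝ) (p u : ι → ℝ) (i : ι) : ℝ :=
  p i * exp (c * u i) / ∑ j, p j * exp (c * u j)

lemma sum_mul_exp_pos [Nonempty ι] {p : ι → ℝ} (hp : ∀ i, 0 < p i) (c : ℝ) (u : ι → ℝ) :
    0 < ∑ i, p i * exp (c * u i) :=
  sum_pos (fun i _ => mul_pos (hp i) (exp_pos _)) univ_nonempty

lemma exp_mul_tiltedLoss [Nonempty ι] {p : ι → ℝ} (hp : ∀ i, 0 < p i) (c c' : ℝ) (u : ι → ℝ) :
    exp (c' * tiltedLoss c p u) = (∑ i, p i * exp (c * u i)) ^ (c' / c) := by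
  rw [rpow_def_of_pos (sum_mul_exp_pos hp c u), tiltedLoss]
  ring_nf

theorem hasFDerivAt_tiltedLoss {E : Type*} [NormedAddCommGroup E] [NormedSpace ℝ E]
    {c : ℝ} (hc : c ≠ 0) {p : ι → ℝ} (hp : ∀ i, 0 < p i) {u : ι → E → ℝ}
    {u' : ι → E →L[ℝ] ℝ} {x : E} (hu : ∀ i, HasFDerivAt (u i) (u' i) x) :
    HasFDerivAt (fun y => tiltedLoss c p fun i => u i y)
      (∑ i, tiltedWeight c p (fun i => u i x) i • u' i) x := by
  rcases isEmpty_or_nonempty ι with hι | hι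
  -- with no terms the loss is the junk value `(1/c) log 0 = 0`
  · simpa [tiltedLoss] using hasFDerivAt_const (0 : ℝ) x
  have hZ : HasFDerivAt (fun y => ∑ i, p i * exp (c * u i y))
      (∑ i, p i • exp (c * u i x) • c • u' i) x :=
    HasFDerivAt.fun_sum fun i _ => (((hu i).const_mul c).exp).const_mul (p i)
  refine ((hZ.log (sum_mul_exp_pos hp c _).ne').const_mul (1 / c)).congr_fderiv ?_
  simp only [tiltedWeight, smul_sum, smul_smul]
  refine sum_congr rfl fun i _ => ?_
  congr 1
  field_simp

theorem hasGradientAt_tiltedLoss {F : Type*} [NormedAddCommGroup F] [InnerProductSpace ℝ F]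
    [CompleteSpace F] {c : ℝ} (hc : c ≠ 0) {p : ι → ℝ} (hp : ∀ i, 0 < p i) {u : ι → F → ℝ}
    {u' : ι → F} {x : F} (hu : ∀ i, HasGradientAt (u i) (u' i) x) :
    HasGradientAt (fun y => tiltedLoss c p fun i => u i y)
      (∑ i, tiltedWeight c p (fun i => u i x) i • u' i) x := by
  rw [hasGradientAt_iff_hasFDerivAt, map_sum]
  simp only [map_smul]
  exact hasFDerivAt_tiltedLoss hc hp fun i => (hu i).hasFDerivAt

end TiltedLoss

lemma tiltedWeight_mul_tiltedWeight {G : ℕ} {n : Fin G → ℕ} (hn : ∀ g, 0 < n g)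
    {v : (g : Fin G) → Fin (n g) → ℝ} {τ : ℝ} {S : Fin G → ℝ}
    (hS : ∀ g, S g = (1 / (n g : ℝ)) * ∑ y, exp (τ * v g y)) (t : ℝ) (g : Fin G) (x : Fin (n g)) :
    tiltedWeight t (fun g => n g / ((∑ g', n g' : ℕ) : ℝ))
        (fun g => tiltedLoss τ (fun _ => 1 / (n g : ℝ)) (v g)) g *
      tiltedWeight τ (fun _ => 1 / (n g : ℝ)) (v g) x =
    S g ^ (t / τ - 1) * exp (τ * v g x) / ∑ g', (n g' : ℝ) * S g' ^ (t / τ) := by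
  have hn' (g : Fin G) : (0 : ℝ) < n g := Nat.cast_pos.mpr (hn g)
  have hN : (0 : ℝ) < (∑ g', n g' : ℕ) :=
    Nat.cast_pos.mpr (sum_pos (fun g _ => hn g) ⟨g, mem_univ g⟩)
  have hSsum (g : Fin G) : ∑ y, 1 / (n g : ℝ) * exp (τ * v g y) = S g := by
    rw [hS, mul_sum]
  have hS0 (g : Fin G) : 0 < S g := by
    have := Fin.pos_iff_nonempty.mp (hn g)
    exact hSsum g ▸ sum_mul_exp_pos (fun _ => one_div_pos.mpr (hn' g)) τ _
  have hR (g : Fin G) : exp (t * tiltedLoss τ (fun _ => 1 / (n g : ℝ)) (v g)) = S g ^ (t / τ) := by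
    have := Fin.pos_iff_nonempty.mp (hn g)
    rw [exp_mul_tiltedLoss (fun _ => one_div_pos.mpr (hn' g)), hSsum]
  have hZ : 0 < ∑ g', (n g' : ℝ) * S g' ^ (t / τ) :=
    sum_pos (fun g' _ => mul_pos (hn' g') (rpow_pos_of_pos (hS0 g') _)) ⟨g, mem_univ g⟩
  simp only [tiltedWeight, hR, hSsum, rpow_sub_one (hS0 g).ne']
  simp only [div_mul_eq_mul_div, ← sum_div]
  have := hn' g
  field_simp

/-- **Hierarchical multi-objective tilted gradient.** Samples are partitioned into `G` groups,
group `g` having `n g > 0` samples, with total size `N = Σ_g n g`. The hierarchical tilted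
loss is `J̃(t,τ;θ) = (1/t)·log((1/N)·Σ_g |g|·exp(t·R̃_g(τ;θ)))` with group-level tilted loss
`R̃_g(τ;θ) = (1/τ)·log((1/|g|)·Σ_{x∈g} exp(τ·f(x;θ)))`. If each sample loss is differentiable
at `θ` with gradient `grad g x`, then `J̃(t,τ;·)` is differentiable at `θ` with gradient
`Σ_g Σ_{x∈g} w_{g,x}(t,τ;θ) • grad g x`, where
`w_{g,x} = (S g)^{t/τ−1}·exp(τ·f(x;θ)) / Σ_{g'} |g'|·(S g')^{t/τ}` and
`S g = (1/|g|)·Σ_{y∈g} exp(τ·f(y;θ))`. -/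
theorem hierarchical_tilted_gradient {d G : ℕ}
    (n : Fin G → ℕ) (hn : ∀ g, 0 < n g)
    (f : (g : Fin G) → Fin (n g) → EuclideanSpace ℝ (Fin d) → ℝ)
    (t τ : ℝ) (ht : t ≠ 0) (hτ : τ ≠ 0)
    (θ : EuclideanSpace ℝ (Fin d))
    (grad : (g : Fin G) → Fin (n g) → EuclideanSpace ℝ (Fin d))
    (hf : ∀ g x, HasGradientAt (f g x) (grad g x) θ)
    (S : Fin G → ℝ)
    (hS : ∀ g, S g = (1 / (n g : ℝ)) * ∑ y, Real.exp (τ * f g y θ))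
    (w : (g : Fin G) → Fin (n g) → ℝ)
    (hw : ∀ g x, w g x =
      (S g ^ (t / τ - 1) * Real.exp (τ * f g x θ)) /
        ∑ g', (n g' : ℝ) * S g' ^ (t / τ)) :
    HasGradientAt
      (fun θ' => (1 / t) * Real.log ((1 / ((∑ g', (n g' : ℕ) : ℕ) : ℝ)) *
        ∑ g, (n g : ℝ) * Real.exp (t *
          ((1 / τ) * Real.log ((1 / (n g : ℝ)) * ∑ x, Real.exp (τ * f g x θ'))))))
      (∑ g, ∑ x, w g x • grad g x) θ := by
  have hn' (g : Fin G) : (0 : ℝ) < n g := Nat.cast_pos.mpr (hn g)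
  have hN (g : Fin G) : (0 : ℝ) < (∑ g', n g' : ℕ) :=
    Nat.cast_pos.mpr (sum_pos (fun g _ => hn g) ⟨g, mem_univ g⟩)
  have hgroup (g : Fin G) := hasGradientAt_tiltedLoss hτ (p := fun _ => 1 / (n g : ℝ))
    (fun _ => one_div_pos.mpr (hn' g)) (hf g)
  convert hasGradientAt_tiltedLoss ht (fun g => div_pos (hn' g) (hN g)) hgroup using 1
  · funext θ'
    simp only [tiltedLoss, mul_sum, div_eq_inv_mul, mul_assoc, one_mul]
  · simp only [smul_sum, smul_smul, tiltedWeight_mul_tiltedWeight hn hS, hw]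
end

section
/- In the GLM setting, let θ̆ : ℝ → ℝ^d be a differentiable curve of stationary solutions, i.e. ∇A(θ̆(t)) = M(t; θ̆(t)) for all t ∈ ℝ, and suppose that for each t the matrix H(t) := ∇²A(θ̆(t)) + t·V(t; θ̆(t)) is invertible. Then the derivative of the solution with respect to the tilt is θ̆'(t) = −H(t)^{-1}·V(t; θ̆(t))·θ̆(t). -/
/-!
Differentiate the stationarity identity `∇A(θ̆ s) = M(s; θ̆ s)` at `s = t`. The mean `M` is an
average of the `Tᵢ` under softmax weights with logits `-s ⟪θ̆ s, Tᵢ⟫`, and the derivative of a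
softmax average is the covariance of the averaged vectors with the logit derivatives
`-⟪Tᵢ, θ̆ t + t θ̆'⟫`, i.e. `-V (θ̆ t + t θ̆')`. Hence `H θ̆' = -V θ̆`, and `Hinv` inverts `H`.
-/

open Real Finset

noncomputable def glmGamma {d N : ℕ} (T : Fin N → EuclideanSpace ℝ (Fin d)) (t : ℝ)
    (θ : EuclideanSpace ℝ (Fin d)) : ℝ :=
  Real.log ((1 / (N : ℝ)) * ∑ i, Real.exp (-t * (inner ℝ θ (T i) : ℝ)))

noncomputable def glmM {d N : ℕ} (T : Fin N → EuclideanSpace ℝ (Fin d)) (t : ℝ)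
    (θ : EuclideanSpace ℝ (Fin d)) : EuclideanSpace ℝ (Fin d) :=
  ∑ i, ((1 / (N : ℝ)) * Real.exp (-t * (inner ℝ θ (T i) : ℝ) - glmGamma T t θ)) • T i

noncomputable def glmV {d N : ℕ} (T : Fin N → EuclideanSpace ℝ (Fin d)) (t : ℝ)
    (θ : EuclideanSpace ℝ (Fin d)) :
    EuclideanSpace ℝ (Fin d) →L[ℝ] EuclideanSpace ℝ (Fin d) :=
  ∑ i, ((1 / (N : ℝ)) * Real.exp (-t * (inner ℝ θ (T i) : ℝ) - glmGamma T t θ)) •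
    ((innerSL ℝ (T i - glmM T t θ)).smulRight (T i - glmM T t θ))

theorem ContDiff.gradient {F : Type*} [NormedAddCommGroup F] [InnerProductSpace ℝ F]
    [CompleteSpace F] {f : F → ℝ} {m n : WithTop ℕ∞} (hf : ContDiff ℝ n f) (hmn : m + 1 ≤ n) :
    ContDiff ℝ m (gradient f) :=
  (InnerProductSpace.toDual ℝ F).symm.contDiff.comp (hf.fderiv_right hmn)

section Softmax

variable {ι : Type*} [Fintype ι]

noncomputable def softmax (x : ι → ℝ) (i : ι) : ℝ :=
  exp (x i) / ∑ j, exp (x j)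

theorem sum_exp_pos (x : ι → ℝ) (i : ι) : 0 < ∑ j, exp (x j) :=
  Finset.sum_pos (fun j _ => exp_pos (x j)) ⟨i, mem_univ i⟩

theorem sum_softmax_mul_sub_sum_softmax_mul (x y : ι → ℝ) :
    ∑ i, softmax x i * (y i - ∑ j, softmax x j * y j) = 0 := by
  rcases isEmpty_or_nonempty ι with hι | ⟨⟨i⟩⟩
  · simp
  have hsum : ∑ j, softmax x j = 1 := by
    simp only [softmax, ← Finset.sum_div]
    exact div_self (sum_exp_pos x i).ne'
  simp only [mul_sub, Finset.sum_sub_distrib, ← Finset.sum_mul, hsum, one_mul, sub_self]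

theorem hasDerivAt_softmax {f : ι → ℝ → ℝ} {f' : ι → ℝ} {t : ℝ}
    (hf : ∀ j, HasDerivAt (f j) (f' j) t) (i : ι) :
    HasDerivAt (fun s => softmax (fun j => f j s) i)
      (softmax (fun j => f j t) i * (f' i - ∑ j, softmax (fun j => f j t) j * f' j)) t := by
  have hS := HasDerivAt.fun_sum (u := univ) fun j _ => (hf j).exp
  have hS0 := (sum_exp_pos (fun j => f j t) i).ne'
  refine ((hf i).exp.fun_div hS hS0).congr_deriv ?_
  simp only [softmax, div_mul_eq_mul_div, ← Finset.sum_div]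
  field_simp

theorem hasDerivAt_sum_softmax_smul {E : Type*} [NormedAddCommGroup E] [NormedSpace ℝ E]
    {f : ι → ℝ → ℝ} {f' : ι → ℝ} {t : ℝ} (hf : ∀ j, HasDerivAt (f j) (f' j) t) (v : ι → E) :
    HasDerivAt (fun s => ∑ i, softmax (fun j => f j s) i • v i)
      (∑ i, (softmax (fun j => f j t) i *
        (f' i - ∑ j, softmax (fun j => f j t) j * f' j)) • v i) t :=
  HasDerivAt.fun_sum fun i _ => (hasDerivAt_softmax hf i).smul_const (v i)

theorem sum_softmax_centered_smul {E : Type*} [NormedAddCommGroup E] [InnerProductSpace ℝ E]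
    (x : ι → ℝ) (v : ι → E) (ψ : E) :
    ∑ i, (softmax x i * (inner ℝ (v i) ψ - ∑ j, softmax x j * inner ℝ (v j) ψ)) • v i
      = ∑ i, (softmax x i * inner ℝ (v i - ∑ j, softmax x j • v j) ψ) •
          (v i - ∑ j, softmax x j • v j) := by
  set m := ∑ j, softmax x j • v j
  have hcentered : ∀ i,
      inner ℝ (v i - m) ψ = inner ℝ (v i) ψ - ∑ j, softmax x j * inner ℝ (v j) ψ := fun i => by
    simp only [m, inner_sub_left, sum_inner, real_inner_smul_left]
  simp only [hcentered, smul_sub, Finset.sum_sub_distrib, ← Finset.sum_smul,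
    sum_softmax_mul_sub_sum_softmax_mul, zero_smul, sub_zero]

end Softmax

theorem glm_weight_eq_softmax {d N : ℕ} (T : Fin N → EuclideanSpace ℝ (Fin d)) (t : ℝ)
    (θ : EuclideanSpace ℝ (Fin d)) (i : Fin N) :
    (1 / (N : ℝ)) * exp (-t * (inner ℝ θ (T i) : ℝ) - glmGamma T t θ)
      = softmax (fun j => -t * (inner ℝ θ (T j) : ℝ)) i := by
  have hN : (0 : ℝ) < N := by exact_mod_cast i.pos
  have hS := sum_exp_pos (fun j => -t * (inner ℝ θ (T j) : ℝ)) i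
  rw [glmGamma, exp_sub, exp_log (by positivity), softmax]
  field_simp

theorem glmM_eq_sum_softmax_smul {d N : ℕ} (T : Fin N → EuclideanSpace ℝ (Fin d)) (t : ℝ)
    (θ : EuclideanSpace ℝ (Fin d)) :
    glmM T t θ = ∑ i, softmax (fun j => -t * (inner ℝ θ (T j) : ℝ)) i • T i := by
  simp only [glmM, glm_weight_eq_softmax]

theorem glmV_apply {d N : ℕ} (T : Fin N → EuclideanSpace ℝ (Fin d)) (t : ℝ)
    (θ x : EuclideanSpace ℝ (Fin d)) :
    glmV T t θ x = ∑ i, (softmax (fun j => -t * (inner ℝ θ (T j) : ℝ)) i *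
      inner ℝ (T i - glmM T t θ) x) • (T i - glmM T t θ) := by
  simp only [glmV, _root_.sum_apply, smul_apply, ContinuousLinearMap.smulRight_apply,
    innerSL_apply_apply, smul_smul, glm_weight_eq_softmax]

theorem hasDerivAt_glmM_comp {d N : ℕ} (T : Fin N → EuclideanSpace ℝ (Fin d))
    {θ : ℝ → EuclideanSpace ℝ (Fin d)} {θ' : EuclideanSpace ℝ (Fin d)} {t : ℝ}
    (hθ : HasDerivAt θ θ' t) :
    HasDerivAt (fun s => glmM T s (θ s)) (-(glmV T t (θ t) (θ t + t • θ'))) t := by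
  have hlogit : ∀ j, HasDerivAt (fun s => -s * (inner ℝ (θ s) (T j) : ℝ))
      (-inner ℝ (T j) (θ t + t • θ')) t := fun j =>
    ((hasDerivAt_id t).neg.mul (hθ.inner ℝ (hasDerivAt_const t (T j)))).congr_deriv (by
      simp only [inner_add_right, real_inner_smul_right, real_inner_comm (T j), inner_zero_right,
        Pi.neg_apply, id_eq, zero_add]
      ring)
  simp only [glmM_eq_sum_softmax_smul]
  refine (hasDerivAt_sum_softmax_smul hlogit T).congr_deriv ?_
  rw [glmV_apply, glmM_eq_sum_softmax_smul, ← sum_softmax_centered_smul, ← Finset.sum_neg_distrib]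
  refine Finset.sum_congr rfl fun i _ => ?_
  rw [← neg_smul]
  congr 1
  simp only [mul_neg, Finset.sum_neg_distrib]
  ring

theorem glm_solution_tilt_derivative_general {d N : ℕ}
    (T : Fin N → EuclideanSpace ℝ (Fin d))
    (A : EuclideanSpace ℝ (Fin d) → ℝ) (hA : ContDiff ℝ 2 A)
    (θbreve : ℝ → EuclideanSpace ℝ (Fin d)) (hθ : Differentiable ℝ θbreve)
    (hstat : ∀ t : ℝ, gradient A (θbreve t) = glmM T t (θbreve t))
    (H Hinv : ℝ → EuclideanSpace ℝ (Fin d) →L[ℝ] EuclideanSpace ℝ (Fin d))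
    (hH : ∀ t : ℝ, H t = fderiv ℝ (gradient A) (θbreve t) + t • glmV T t (θbreve t))
    (hHinv : ∀ t : ℝ,
      (H t).comp (Hinv t) = ContinuousLinearMap.id ℝ (EuclideanSpace ℝ (Fin d)) ∧
      (Hinv t).comp (H t) = ContinuousLinearMap.id ℝ (EuclideanSpace ℝ (Fin d)))
    (t : ℝ) :
    deriv θbreve t = -(Hinv t (glmV T t (θbreve t) (θbreve t))) := by
  have hθt : HasDerivAt θbreve (deriv θbreve t) t := (hθ t).hasDerivAt
  have hgrad : HasDerivAt (fun s => gradient A (θbreve s))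
      (fderiv ℝ (gradient A) (θbreve t) (deriv θbreve t)) t :=
    ((hA.gradient (m := 1) (by norm_num)).differentiable one_ne_zero _).hasFDerivAt
      |>.comp_hasDerivAt t hθt
  have hlinearized : fderiv ℝ (gradient A) (θbreve t) (deriv θbreve t)
      = -(glmV T t (θbreve t) (θbreve t + t • deriv θbreve t)) := by
    rw [funext hstat] at hgrad
    exact hgrad.unique (hasDerivAt_glmM_comp T hθt)
  have hHθ' : H t (deriv θbreve t) = -(glmV T t (θbreve t) (θbreve t)) := by
    rw [hH, add_apply, smul_apply, hlinearized, map_add, map_smul]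
    abel
  rw [← map_neg, ← hHθ', ← ContinuousLinearMap.comp_apply, (hHinv t).2,
    ContinuousLinearMap.id_apply]

/-- **Derivative of the solution with respect to the tilt.** In the GLM setting, let
`θ̆ : ℝ → ℝ^d` be a differentiable curve of stationary solutions, i.e.
`∇A(θ̆(t)) = M(t;θ̆(t))` for all `t`, and suppose `H(t) = ∇²A(θ̆(t)) + t·V(t;θ̆(t))` has a
two-sided inverse `Hinv(t)` for each `t`. Then `θ̆'(t) = −H(t)⁻¹·V(t;θ̆(t))·θ̆(t)`. -/
theorem glm_solution_tilt_derivative {d N : ℕ} (hN : 0 < N)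
    (T : Fin N → EuclideanSpace ℝ (Fin d))
    (A : EuclideanSpace ℝ (Fin d) → ℝ) (hA : ContDiff ℝ 2 A)
    (θbreve : ℝ → EuclideanSpace ℝ (Fin d)) (hθ : Differentiable ℝ θbreve)
    (hstat : ∀ t : ℝ, gradient A (θbreve t) = glmM T t (θbreve t))
    (H Hinv : ℝ → EuclideanSpace ℝ (Fin d) →L[ℝ] EuclideanSpace ℝ (Fin d))
    (hH : ∀ t : ℝ, H t = fderiv ℝ (gradient A) (θbreve t) + t • glmV T t (θbreve t))
    (hHinv : ∀ t : ℝ,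
      (H t).comp (Hinv t) = ContinuousLinearMap.id ℝ (EuclideanSpace ℝ (Fin d)) ∧
      (Hinv t).comp (H t) = ContinuousLinearMap.id ℝ (EuclideanSpace ℝ (Fin d)))
    (t : ℝ) :
    deriv θbreve t = -(Hinv t (glmV T t (θbreve t) (θbreve t))) :=
  glm_solution_tilt_derivative_general T A hA θbreve hθ hstat H Hinv hH hHinv t
end
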